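/- In the electrical Lie algebra 𝔢_{C_n} (n ≥ 4), with w = u_{1,3} = [e_1, [e_1, [e_2, e_3]]], the following identities hold: [[e_1, e_2], w] = w; [[e_3, e_4], w] = w; [a_{2i+1,j}, w] = 0 for all i, j with j > 2i+1 ≥ 3 and j ≠ 4; and [a_{1,j}, w] = 0 for all j ≥ 3. -/

import Mathlib

noncomputable section

open FreeLieAlgebra Matrix

abbrev FL (n : ℕ) : Type := FreeLieAlgebra ℂ (Fin n)

/-- Defining relations of the type `C` electrical Lie algebra (index `i` ↔ generator
`e_{i+1}`). -/
def relC (n : ℕ) : Set (FL n) :=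
  {x | ∃ i j : Fin n, ((i : ℕ) + 2 ≤ (j : ℕ) ∨ (j : ℕ) + 2 ≤ (i : ℕ)) ∧
        x = ⁅of ℂ i, of ℂ j⁆} ∪
  {x | ∃ i j : Fin n, ((i : ℕ) + 1 = (j : ℕ) ∨ (j : ℕ) + 1 = (i : ℕ)) ∧ (i : ℕ) ≠ 0 ∧
        x = ⁅of ℂ i, ⁅of ℂ i, of ℂ j⁆⁆ + (2 : ℂ) • of ℂ i} ∪
  {x | ∃ i j : Fin n, (i : ℕ) = 0 ∧ (j : ℕ) = 1 ∧
        x = ⁅of ℂ i, ⁅of ℂ i, ⁅of ℂ i, of ℂ j⁆⁆⁆}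

/-- The electrical Lie algebra of type `C_n`. -/
abbrev eC (n : ℕ) : Type := FL n ⧸ LieSubmodule.lieSpan ℂ (FL n) (relC n)

/-- The generator `e_{i+1}` of `eC n`. -/
def gC (n : ℕ) (i : Fin n) : eC n :=
  LieSubmodule.Quotient.mk' (LieSubmodule.lieSpan ℂ (FL n) (relC n)) (of ℂ i)

/-- The generators of `eC n` as a function on `1`-based labels `1, …, n` (and junk value `0`
outside this range). -/
def gC' (n : ℕ) (k : ℕ) : eC n :=
  if h : 1 ≤ k ∧ k ≤ n then gC n ⟨k - 1, by omega⟩ else 0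

/-- `aElt g i j = [g i, [g (i+1), …, [g (j-1), g j]…]]` (right-nested bracket);
`aElt g i j = g i` when `j ≤ i`. -/
def aElt {L : Type*} [LieRing L] (g : ℕ → L) (i j : ℕ) : L :=
  if h : j ≤ i then g i else ⁅g i, aElt g (i + 1) j⁆
termination_by j - i
decreasing_by omega

/-- `uElt g 1 j = [g 1, [g 1, a_{2,j}]]` and `uElt g i j = [g i, uElt g (i-1) j]` for `i ≥ 2`. -/
def uElt {L : Type*} [LieRing L] (g : ℕ → L) : ℕ → ℕ → L
  | 0, _ => 0
  | 1, j => ⁅g 1, ⁅g 1, aElt g 2 j⁆⁆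
  | (i + 2), j => ⁅g (i + 2), uElt g (i + 1) j⁆


/-!
Write `t = [e₁, e₂]`, `p = a_{1,3}`, `s = u_{1,2} = [e₁, [e₁, e₂]]`, `w = u_{1,3} = [e₁, p] = [s, e₃]`
and `r = [e₃, e₄]`. Only the relations among `e₁, …, e₄` enter, together with the fact that
`e₅, e₆, …` commute with `e₁, e₂, e₃` and hence centralize `w`; and only `2` and `3` are ever
cancelled, so the computation works in any torsion-free Lie ring. Expanding `[t, w]`
with the Jacobi identity, using `[e₁, s] = 0`, `[e₁, w] = 0` and the type `A₃` identity
`[t, [e₂, e₃]] = -t - [e₂, e₃]`, gives `[t, w] = -2 [t, w] + 3 w`; expanding `[r, w] = [r, [s, e₃]]`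
gives `[r, w] = -[r, w] + 2 w`. Then `[p, w] = 0`, and `[a_{1,4}, w] = [[p, e₄], w] = 0` follows from
`[p, r] = -p`. Finally, for `j ≥ 5`, `a_{k,j} = [a_{k,4}, a_{5,j}]` with `a_{5,j}` centralizing `w`,
so `[a_{k,j}, w] = [[a_{k,4}, w], a_{5,j}]`, which vanishes since `[a_{k,4}, w]` is `0` or `w`.
-/

section LieRing

variable {L : Type*} [LieRing L]

theorem aElt_of_le (g : ℕ → L) {i j : ℕ} (h : j ≤ i) : aElt g i j = g i := by
  rw [aElt, dif_pos h]

theorem aElt_of_lt (g : ℕ → L) {i j : ℕ} (h : i < j) :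
    aElt g i j = ⁅g i, aElt g (i + 1) j⁆ := by
  rw [aElt, dif_neg (not_le.2 h)]

theorem aElt_one_three (g : ℕ → L) : aElt g 1 3 = ⁅g 1, ⁅g 2, g 3⁆⁆ := by
  rw [aElt_of_lt g (by norm_num), aElt_of_lt g (by norm_num), aElt_of_le g le_rfl]

theorem aElt_three_four (g : ℕ → L) : aElt g 3 4 = ⁅g 3, g 4⁆ := by
  rw [aElt_of_lt g (by norm_num), aElt_of_le g le_rfl]

theorem uElt_one_two (g : ℕ → L) : uElt g 1 2 = ⁅g 1, ⁅g 1, g 2⁆⁆ := by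
  rw [uElt, aElt_of_le g le_rfl]

theorem uElt_one_three (g : ℕ → L) : uElt g 1 3 = ⁅g 1, aElt g 1 3⁆ := by
  rw [uElt, ← aElt_of_lt g (by norm_num)]

theorem aElt_lie_eq_zero (g : ℕ → L) (x : L) {i j : ℕ} (hij : i ≤ j)
    (h : ∀ m, i ≤ m → m ≤ j → ⁅g m, x⁆ = 0) : ⁅aElt g i j, x⁆ = 0 := by
  rcases hij.eq_or_lt with rfl | hlt
  · rw [aElt_of_le g le_rfl, h i le_rfl le_rfl]
  · rw [aElt_of_lt g hlt, lie_lie, h i le_rfl hlt.le,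
      aElt_lie_eq_zero g x hlt (fun m hm hmj => h m (by omega) hmj), lie_zero, lie_zero, sub_zero]
termination_by j - i

theorem aElt_eq_lie_aElt (g : ℕ → L) {i k j : ℕ} (hik : i ≤ k) (hkj : k < j)
    (hg : ∀ m l, i ≤ m → m + 2 ≤ l → l ≤ j → ⁅g m, g l⁆ = 0) :
    aElt g i j = ⁅aElt g i k, aElt g (k + 1) j⁆ := by
  rcases hik.eq_or_lt with rfl | hlt
  · rw [aElt_of_lt g hkj, aElt_of_le g le_rfl]
  · have hcomm : ⁅g i, aElt g (k + 1) j⁆ = 0 := by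
      rw [← lie_skew, aElt_lie_eq_zero g _ hkj fun l hl hlj => by
        rw [← lie_skew, hg i l le_rfl (by omega) hlj, neg_zero], neg_zero]
    rw [aElt_of_lt g (hlt.trans hkj), aElt_eq_lie_aElt g hlt hkj fun m l hm => hg m l (by omega),
      leibniz_lie, hcomm, lie_zero, add_zero, ← aElt_of_lt g hlt]
termination_by k - i

theorem lie_lie_eq_zero_of_lie_eq_zero {x a b : L} (ha : ⁅x, a⁆ = 0) (hb : ⁅x, b⁆ = 0) :
    ⁅x, ⁅a, b⁆⁆ = 0 := by
  rw [leibniz_lie, ha, hb, zero_lie, lie_zero, add_zero]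

theorem lie_lie_lie_eq_neg_sub [IsAddTorsionFree L] {a b c : L} (hac : ⁅a, c⁆ = 0)
    (hba : ⁅b, ⁅b, a⁆⁆ = -(2 • b)) (hbc : ⁅b, ⁅b, c⁆⁆ = -(2 • b)) :
    ⁅⁅a, b⁆, ⁅b, c⁆⁆ = -⁅a, b⁆ - ⁅b, c⁆ := by
  have hbab : ⁅b, ⁅a, b⁆⁆ = 2 • b := by rw [← lie_skew a b, lie_neg, hba, neg_neg]
  have hacb : ⁅a, ⁅b, c⁆⁆ = ⁅⁅a, b⁆, c⁆ := by rw [leibniz_lie, hac, lie_zero, add_zero]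
  have h₁ : ⁅b, ⁅a, ⁅b, c⁆⁆⁆ = 2 • ⁅b, c⁆ + ⁅⁅a, b⁆, ⁅b, c⁆⁆ := by
    rw [hacb, leibniz_lie, hbab, nsmul_lie]
  have h₂ : ⁅⁅a, b⁆, ⁅b, c⁆⁆ = -(2 • ⁅a, b⁆) - ⁅b, ⁅a, ⁅b, c⁆⁆⁆ := by
    rw [lie_lie, hbc, lie_neg, lie_nsmul]
  refine (nsmul_right_inj two_ne_zero).1 ?_
  linear_combination (norm := abel) h₂ - h₁

/-- `g k` plays the role of `e_k` for `1 ≤ k ≤ n`; the values of `g` elsewhere are unconstrained. -/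
structure IsElectricalC (n : ℕ) (g : ℕ → L) : Prop where
  lie_eq_zero : ∀ i j, 1 ≤ i → i + 2 ≤ j → j ≤ n → ⁅g i, g j⁆ = 0
  lie_lie_succ : ∀ i, 2 ≤ i → i + 1 ≤ n → ⁅g i, ⁅g i, g (i + 1)⁆⁆ = -(2 • g i)
  lie_lie_pred : ∀ i, 1 ≤ i → i + 1 ≤ n → ⁅g (i + 1), ⁅g (i + 1), g i⁆⁆ = -(2 • g (i + 1))
  lie_lie_lie_one_two : 2 ≤ n → ⁅g 1, ⁅g 1, ⁅g 1, g 2⁆⁆⁆ = 0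

end LieRing

namespace IsElectricalC

variable {L : Type*} [LieRing L] {n : ℕ} {g : ℕ → L}

theorem lie_eq_zero' (hg : IsElectricalC n g) (i j : ℕ) (hj : 1 ≤ j) (hji : j + 2 ≤ i)
    (hi : i ≤ n) : ⁅g i, g j⁆ = 0 := by
  rw [← lie_skew, hg.lie_eq_zero j i hj hji hi, neg_zero]

theorem lie_one_uElt_one_two (hg : IsElectricalC n g) (hn : 2 ≤ n) : ⁅g 1, uElt g 1 2⁆ = 0 := by
  rw [uElt_one_two]
  exact hg.lie_lie_lie_one_two hn

theorem lie_uElt_one_three_of_five_le (hg : IsElectricalC n g) {m : ℕ} (hm : 5 ≤ m)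
    (hmn : m ≤ n) : ⁅g m, uElt g 1 3⁆ = 0 := by
  have hgm : ∀ i, 1 ≤ i → i ≤ 3 → ⁅g m, g i⁆ = 0 := fun i hi hi3 =>
    hg.lie_eq_zero' m i hi (by omega) hmn
  rw [uElt_one_three, aElt_one_three]
  exact lie_lie_eq_zero_of_lie_eq_zero (hgm 1 le_rfl (by norm_num))
    (lie_lie_eq_zero_of_lie_eq_zero (hgm 1 le_rfl (by norm_num))
      (lie_lie_eq_zero_of_lie_eq_zero (hgm 2 (by norm_num) (by norm_num))
        (hgm 3 (by norm_num) le_rfl)))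

theorem aElt_lie_uElt_one_three_of_five_le (hg : IsElectricalC n g) {i j : ℕ} (hi : 5 ≤ i)
    (hij : i ≤ j) (hjn : j ≤ n) : ⁅aElt g i j, uElt g 1 3⁆ = 0 :=
  aElt_lie_eq_zero g _ hij fun m him hmj => hg.lie_uElt_one_three_of_five_le (by omega) (by omega)

theorem lie_aElt_uElt_one_three_eq (hg : IsElectricalC n g) {k j : ℕ} (hk : 1 ≤ k) (hk4 : k ≤ 4)
    (hj : 5 ≤ j) (hjn : j ≤ n) :
    ⁅aElt g k j, uElt g 1 3⁆ = ⁅⁅aElt g k 4, uElt g 1 3⁆, aElt g 5 j⁆ := by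
  rw [aElt_eq_lie_aElt g hk4 (by omega) fun m l hm hml hl => hg.lie_eq_zero m l (by omega) hml
    (by omega), lie_lie, hg.aElt_lie_uElt_one_three_of_five_le le_rfl hj hjn, lie_zero, zero_sub,
    lie_skew]

theorem aElt_one_three_eq_lie (hg : IsElectricalC n g) (hn : 3 ≤ n) :
    aElt g 1 3 = ⁅⁅g 1, g 2⁆, g 3⁆ := by
  rw [aElt_one_three, leibniz_lie, hg.lie_eq_zero 1 3 le_rfl le_rfl hn, lie_zero, add_zero]

theorem uElt_one_three_eq_lie (hg : IsElectricalC n g) (hn : 3 ≤ n) :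
    uElt g 1 3 = ⁅uElt g 1 2, g 3⁆ := by
  rw [uElt_one_three, hg.aElt_one_three_eq_lie hn, leibniz_lie,
    hg.lie_eq_zero 1 3 le_rfl le_rfl hn, lie_zero, add_zero, uElt_one_two]

theorem lie_one_uElt_one_three (hg : IsElectricalC n g) (hn : 3 ≤ n) :
    ⁅g 1, uElt g 1 3⁆ = 0 := by
  rw [hg.uElt_one_three_eq_lie hn]
  exact lie_lie_eq_zero_of_lie_eq_zero (hg.lie_one_uElt_one_two (by omega))
    (hg.lie_eq_zero 1 3 le_rfl le_rfl hn)

theorem lie_one_lie_two_uElt_one_three (hg : IsElectricalC n g) (hn : 3 ≤ n) :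
    ⁅g 1, ⁅g 2, uElt g 1 3⁆⁆ = ⁅⁅g 1, g 2⁆, uElt g 1 3⁆ := by
  rw [leibniz_lie, hg.lie_one_uElt_one_three hn, lie_zero, add_zero]

theorem lie_three_uElt_one_three (hg : IsElectricalC n g) (hn : 3 ≤ n) :
    ⁅g 3, uElt g 1 3⁆ = 0 := by
  have c31 : ⁅g 3, g 1⁆ = 0 := hg.lie_eq_zero' 3 1 le_rfl le_rfl hn
  have h323 : ⁅g 3, ⁅g 2, g 3⁆⁆ = 2 • g 3 := by
    rw [← lie_skew (g 2), lie_neg, hg.lie_lie_pred 2 (by norm_num) hn, neg_neg]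
  have h3p : ⁅g 3, aElt g 1 3⁆ = 0 := by
    rw [aElt_one_three, leibniz_lie, c31, zero_lie, zero_add, h323, lie_nsmul,
      hg.lie_eq_zero 1 3 le_rfl le_rfl hn, smul_zero]
  rw [uElt_one_three, leibniz_lie, c31, zero_lie, zero_add, h3p, lie_zero]

theorem lie_three_four_uElt_one_two (hg : IsElectricalC n g) (hn : 4 ≤ n) :
    ⁅⁅g 3, g 4⁆, uElt g 1 2⁆ = ⁅g 4, uElt g 1 3⁆ := by
  have c41 : ⁅g 4, g 1⁆ = 0 := hg.lie_eq_zero' 4 1 le_rfl (by norm_num) hn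
  have c42 : ⁅g 4, g 2⁆ = 0 := hg.lie_eq_zero' 4 2 (by norm_num) le_rfl hn
  have h4s : ⁅g 4, uElt g 1 2⁆ = 0 := by
    rw [uElt_one_two]
    exact lie_lie_eq_zero_of_lie_eq_zero c41 (lie_lie_eq_zero_of_lie_eq_zero c41 c42)
  rw [lie_lie, h4s, lie_zero, ← lie_skew (g 3), ← hg.uElt_one_three_eq_lie (by omega), lie_neg,
    zero_sub, neg_neg]

variable [IsAddTorsionFree L]

theorem lie_two_aElt_one_three (hg : IsElectricalC n g) (hn : 3 ≤ n) :
    ⁅g 2, aElt g 1 3⁆ = ⁅g 2, g 3⁆ - ⁅g 1, g 2⁆ := by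
  have h212 : ⁅g 2, ⁅g 1, g 2⁆⁆ = 2 • g 2 := by
    rw [← lie_skew (g 1), lie_neg, hg.lie_lie_pred 1 le_rfl (by omega), neg_neg]
  have hty := lie_lie_lie_eq_neg_sub (hg.lie_eq_zero 1 3 le_rfl le_rfl hn)
    (hg.lie_lie_pred 1 le_rfl (by omega)) (hg.lie_lie_succ 2 le_rfl hn)
  rw [hg.aElt_one_three_eq_lie hn, leibniz_lie, h212, nsmul_lie, hty]
  abel

theorem lie_lie_one_two_aElt_one_three (hg : IsElectricalC n g) (hn : 3 ≤ n) :
    ⁅⁅g 1, g 2⁆, aElt g 1 3⁆ = aElt g 1 3 - uElt g 1 2 - ⁅g 2, uElt g 1 3⁆ := by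
  rw [lie_lie, hg.lie_two_aElt_one_three hn, lie_sub, ← aElt_one_three, ← uElt_one_two,
    ← uElt_one_three]

theorem lie_uElt_one_two_aElt_one_three (hg : IsElectricalC n g) (hn : 3 ≤ n) :
    ⁅uElt g 1 2, aElt g 1 3⁆ = ⁅⁅g 1, g 2⁆, uElt g 1 3⁆ - 2 • uElt g 1 3 := by
  have hty := lie_lie_lie_eq_neg_sub (hg.lie_eq_zero 1 3 le_rfl le_rfl hn)
    (hg.lie_lie_pred 1 le_rfl (by omega)) (hg.lie_lie_succ 2 le_rfl hn)
  have hsy : ⁅uElt g 1 2, ⁅g 2, g 3⁆⁆ = ⁅g 2, uElt g 1 3⁆ - 2 • aElt g 1 3 := by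
    rw [uElt_one_two, lie_lie, hty, lie_sub, lie_neg, ← uElt_one_two, ← aElt_one_three,
      hg.lie_lie_one_two_aElt_one_three hn]
    abel
  calc ⁅uElt g 1 2, aElt g 1 3⁆ = ⁅g 1, ⁅uElt g 1 2, ⁅g 2, g 3⁆⁆⁆ := by
        rw [leibniz_lie (g 1), hg.lie_one_uElt_one_two (by omega), zero_lie, zero_add,
          ← aElt_one_three]
    _ = _ := by
        rw [hsy, lie_sub, lie_nsmul, hg.lie_one_lie_two_uElt_one_three hn, ← uElt_one_three]

theorem lie_lie_one_two_uElt_one_three (hg : IsElectricalC n g) (hn : 3 ≤ n) :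
    ⁅⁅g 1, g 2⁆, uElt g 1 3⁆ = uElt g 1 3 := by
  have key : ⁅⁅g 1, g 2⁆, uElt g 1 3⁆ =
      -(⁅⁅g 1, g 2⁆, uElt g 1 3⁆ - 2 • uElt g 1 3) + (uElt g 1 3 - ⁅⁅g 1, g 2⁆, uElt g 1 3⁆) := by
    conv_lhs => rw [uElt_one_three, leibniz_lie, ← lie_skew _ (g 1), neg_lie, ← uElt_one_two]
    rw [hg.lie_uElt_one_two_aElt_one_three hn, hg.lie_lie_one_two_aElt_one_three hn, lie_sub,
      lie_sub, hg.lie_one_uElt_one_two (by omega), ← uElt_one_three,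
      hg.lie_one_lie_two_uElt_one_three hn, sub_zero]
  exact (nsmul_right_inj three_ne_zero).1 (by linear_combination (norm := abel) key)

theorem lie_aElt_one_three_uElt_one_three (hg : IsElectricalC n g) (hn : 3 ≤ n) :
    ⁅aElt g 1 3, uElt g 1 3⁆ = 0 := by
  rw [hg.aElt_one_three_eq_lie hn, lie_lie, hg.lie_three_uElt_one_three hn,
    hg.lie_lie_one_two_uElt_one_three hn, hg.lie_three_uElt_one_three hn, lie_zero, sub_zero]

theorem lie_lie_three_four_uElt_one_three (hg : IsElectricalC n g) (hn : 4 ≤ n) :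
    ⁅⁅g 3, g 4⁆, uElt g 1 3⁆ = uElt g 1 3 := by
  have h43w : ⁅⁅g 4, uElt g 1 3⁆, g 3⁆ = -⁅⁅g 3, g 4⁆, uElt g 1 3⁆ := by
    rw [lie_lie, ← lie_skew (uElt g 1 3) (g 3), hg.lie_three_uElt_one_three (by omega), neg_zero,
      lie_zero, zero_sub, ← lie_skew (g 4) (g 3), lie_neg, neg_neg, ← lie_skew (uElt g 1 3)]
  have h343 : ⁅⁅g 3, g 4⁆, g 3⁆ = 2 • g 3 := by
    rw [← lie_skew, hg.lie_lie_succ 3 (by norm_num) hn, neg_neg]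
  have key : ⁅⁅g 3, g 4⁆, uElt g 1 3⁆ = -⁅⁅g 3, g 4⁆, uElt g 1 3⁆ + 2 • uElt g 1 3 := by
    conv_lhs => rw [hg.uElt_one_three_eq_lie (by omega), leibniz_lie]
    rw [hg.lie_three_four_uElt_one_two hn, h43w, h343, lie_nsmul,
      ← hg.uElt_one_three_eq_lie (by omega)]
  exact (nsmul_right_inj two_ne_zero).1 (by linear_combination (norm := abel) key)

theorem lie_aElt_one_three_lie_three_four (hg : IsElectricalC n g) (hn : 4 ≤ n) :
    ⁅aElt g 1 3, ⁅g 3, g 4⁆⁆ = -aElt g 1 3 := by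
  have h1r : ⁅g 1, ⁅g 3, g 4⁆⁆ = 0 := lie_lie_eq_zero_of_lie_eq_zero
    (hg.lie_eq_zero 1 3 le_rfl le_rfl (by omega)) (hg.lie_eq_zero 1 4 le_rfl (by norm_num) hn)
  have hyr : ⁅⁅g 2, g 3⁆, ⁅g 3, g 4⁆⁆ = -⁅g 2, g 3⁆ - ⁅g 3, g 4⁆ := by
    have hry := lie_lie_lie_eq_neg_sub (hg.lie_eq_zero' 4 2 (by norm_num) le_rfl hn)
      (hg.lie_lie_succ 3 (by norm_num) hn) (hg.lie_lie_pred 2 (by norm_num) (by omega))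
    rw [← lie_skew (g 3) (g 2), ← lie_skew (g 4) (g 3), neg_lie, lie_neg, neg_neg] at hry
    rw [← lie_skew, hry]
    abel
  rw [aElt_one_three, lie_lie, hyr, h1r, lie_zero, sub_zero, lie_sub, lie_neg, h1r, sub_zero]

theorem lie_aElt_one_four_uElt_one_three (hg : IsElectricalC n g) (hn : 4 ≤ n) :
    ⁅aElt g 1 4, uElt g 1 3⁆ = 0 := by
  have ha14 : aElt g 1 4 = ⁅aElt g 1 3, g 4⁆ := by
    rw [aElt_eq_lie_aElt g (k := 3) (by norm_num) (by norm_num)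
      fun m l hm hml hl => hg.lie_eq_zero m l hm hml (by omega), aElt_of_le g le_rfl]
  have hps : ⁅aElt g 1 3, uElt g 1 2⁆ = uElt g 1 3 := by
    rw [← lie_skew (aElt g 1 3), hg.lie_uElt_one_two_aElt_one_three (by omega),
      hg.lie_lie_one_two_uElt_one_three (by omega)]
    abel
  rw [ha14, lie_lie, hg.lie_aElt_one_three_uElt_one_three (by omega), lie_zero, sub_zero,
    ← hg.lie_three_four_uElt_one_two hn, leibniz_lie, hg.lie_aElt_one_three_lie_three_four hn,
    neg_lie, hps, hg.lie_lie_three_four_uElt_one_three hn, neg_add_cancel]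

end IsElectricalC

theorem gC'_of_le {n k : ℕ} (hk : 1 ≤ k) (hkn : k ≤ n) : gC' n k = gC n ⟨k - 1, by omega⟩ :=
  dif_pos ⟨hk, hkn⟩

theorem mk_eq_zero_of_mem_relC {n : ℕ} {x : FL n} (hx : x ∈ relC n) :
    LieSubmodule.Quotient.mk' (LieSubmodule.lieSpan ℂ (FL n) (relC n)) x = 0 :=
  (LieSubmodule.Quotient.mk_eq_zero _).2 (LieSubmodule.subset_lieSpan hx)

theorem gC_lie_gC_lie_gC (n : ℕ) (i j : Fin n) (hij : (i : ℕ) + 1 = j ∨ (j : ℕ) + 1 = i)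
    (hi : (i : ℕ) ≠ 0) : ⁅gC n i, ⁅gC n i, gC n j⁆⁆ = -(2 • gC n i) := by
  have h := mk_eq_zero_of_mem_relC (Or.inl (Or.inr ⟨i, j, hij, hi, rfl⟩))
  rw [map_add, map_smul, two_smul] at h
  rw [two_nsmul]
  exact eq_neg_of_add_eq_zero_left h

theorem isElectricalC_gC' (n : ℕ) : IsElectricalC n (gC' n) where
  lie_eq_zero i j hi hij hjn := by
    rw [gC'_of_le hi (by omega), gC'_of_le (by omega) hjn]
    exact mk_eq_zero_of_mem_relC
      (Or.inl (Or.inl ⟨_, _, Or.inl (show i - 1 + 2 ≤ j - 1 by omega), rfl⟩))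
  lie_lie_succ i hi hin := by
    rw [gC'_of_le (by omega) (by omega), gC'_of_le (by omega) hin]
    exact gC_lie_gC_lie_gC n _ _ (Or.inl (by dsimp only; omega)) (by dsimp only; omega)
  lie_lie_pred i hi hin := by
    rw [gC'_of_le (by omega) hin, gC'_of_le hi (by omega)]
    exact gC_lie_gC_lie_gC n _ _ (Or.inr (by dsimp only; omega)) (by dsimp only; omega)
  lie_lie_lie_one_two hn := by
    rw [gC'_of_le le_rfl (by omega), gC'_of_le (by norm_num) hn]
    exact mk_eq_zero_of_mem_relC (Or.inr ⟨_, _, rfl, rfl, rfl⟩)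

theorem stmt11 (n : ℕ) (hn : 4 ≤ n) :
    (⁅⁅gC' n 1, gC' n 2⁆, uElt (gC' n) 1 3⁆ = uElt (gC' n) 1 3) ∧
    (⁅⁅gC' n 3, gC' n 4⁆, uElt (gC' n) 1 3⁆ = uElt (gC' n) 1 3) ∧
    (∀ i j : ℕ, 3 ≤ 2 * i + 1 → 2 * i + 1 < j → j ≤ n → j ≠ 4 →
      ⁅aElt (gC' n) (2 * i + 1) j, uElt (gC' n) 1 3⁆ = 0) ∧
    (∀ j : ℕ, 3 ≤ j → j ≤ n → ⁅aElt (gC' n) 1 j, uElt (gC' n) 1 3⁆ = 0) := by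
  have hg := isElectricalC_gC' n
  have : IsAddTorsionFree (eC n) := .of_isTorsionFree ℂ _
  refine ⟨hg.lie_lie_one_two_uElt_one_three (by omega), hg.lie_lie_three_four_uElt_one_three hn,
    fun i j hi hij hjn hj4 => ?_, fun j hj hjn => ?_⟩
  · obtain h3 | h5 : 2 * i + 1 = 3 ∨ 5 ≤ 2 * i + 1 := by omega
    · rw [h3, hg.lie_aElt_uElt_one_three_eq (by norm_num) (by norm_num) (by omega) hjn,
        aElt_three_four, hg.lie_lie_three_four_uElt_one_three hn, ← lie_skew,
        hg.aElt_lie_uElt_one_three_of_five_le le_rfl (by omega) hjn, neg_zero]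
    · exact hg.aElt_lie_uElt_one_three_of_five_le h5 hij.le hjn
  · obtain rfl | rfl | hj5 : j = 3 ∨ j = 4 ∨ 5 ≤ j := by omega
    · exact hg.lie_aElt_one_three_uElt_one_three (by omega)
    · exact hg.lie_aElt_one_four_uElt_one_three hn
    · rw [hg.lie_aElt_uElt_one_three_eq le_rfl (by norm_num) hj5 hjn,
        hg.lie_aElt_one_four_uElt_one_three hn, zero_lie]
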